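/- Let H ≥ 2, let P^{int} and P̃ be transition kernels on S ∪ {s†} with P^{int}_h(s†|s†,a) = P̃_h(s†|s†,a) = 1 for all h,a, such that P^{int} is (1/H)-multiplicatively accurate to P̃, and let φ be a nonempty finite set of policies on S ∪ {s†}. For each (h,s,a) ∈ {1,…,H}×S×A choose π_{h,s,a} ∈ φ attaining max_{π∈φ} V^π(1_{h,s,a},P^{int}), and define μ_h(s,a) := (1/(H·|S|·|A|)) · ∑_{(h',s',a') ∈ {1,…,H}×S×A} V^{π_{h',s',a'}}(1_{h,s,a},P̃). Then for every (h,s,a) ∈ {1,…,H}×S×A and every π ∈ φ: V^π(1_{h,s,a},P̃) ≤ 12·H·|S|·|A|·μ_h(s,a). -/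

import Mathlib

/-- The state-visitation distribution `d^{π,P}` of a policy `π` and transition
kernel `P` in a finite-horizon MDP with initial state `s₁` (0-based step);
`visit s₁ π P h x * π h x a` is the visitation probability
`V^π(1_{h+1,x,a},P)`. -/
def visit {X A : Type*} [Fintype X] [Fintype A] [DecidableEq X] (s₁ : X)
    (π : ℕ → X → A → ℝ) (P : ℕ → X → A → X → ℝ) : ℕ → X → ℝ
  | 0 => fun x => if x = s₁ then 1 else 0
  | h + 1 => fun x' => ∑ x : X, ∑ a : A, visit s₁ π P h x * π h x a * P h x a x'

lemma visit_nonneg {X A : Type*} [Fintype X] [Fintype A] [DecidableEq X]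
    (s₁ : X) (π : ℕ → X → A → ℝ) (P : ℕ → X → A → X → ℝ) (h : ℕ)
    (hπ : ∀ j < h, ∀ x a, 0 ≤ π j x a)
    (hP : ∀ j < h, ∀ x a x', 0 ≤ P j x a x') :
    ∀ x, 0 ≤ visit s₁ π P h x := by
  induction h with
  | zero => intro x; simp only [visit]; split <;> norm_num
  | succ n ih =>
    intro x'
    rw [visit]
    refine Finset.sum_nonneg fun x _ => Finset.sum_nonneg fun a _ => ?_
    exact mul_nonneg (mul_nonneg
      (ih (fun j hj => hπ j (hj.trans n.lt_succ_self))
          (fun j hj => hP j (hj.trans n.lt_succ_self)) x)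
      (hπ n n.lt_succ_self x a)) (hP n n.lt_succ_self x a x')

lemma visit_le {S A : Type*} [Fintype S] [Fintype A] [DecidableEq S]
    (s₁ : S) (π : ℕ → S ⊕ Unit → A → ℝ)
    (Q P : ℕ → S ⊕ Unit → A → S ⊕ Unit → ℝ)
    (c : ℝ) (hc : 0 ≤ c) (h : ℕ)
    (hπ : ∀ j < h, ∀ x a, 0 ≤ π j x a)
    (hQnn : ∀ j < h, ∀ x a x', 0 ≤ Q j x a x')
    (hPnn : ∀ j < h, ∀ x a x', 0 ≤ P j x a x')
    (hQabs : ∀ j < h, ∀ a s', Q j (Sum.inr ()) a (Sum.inl s') = 0)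
    (hle : ∀ j < h, ∀ s a s', Q j (Sum.inl s) a (Sum.inl s') ≤
      c * P j (Sum.inl s) a (Sum.inl s')) :
    ∀ s : S, visit (Sum.inl s₁) π Q h (Sum.inl s) ≤
      c ^ h * visit (Sum.inl s₁) π P h (Sum.inl s) := by
  induction h with
  | zero => intro s; simp [visit]
  | succ n ih =>
    intro s
    have hπ' := fun j hj => hπ j (Nat.lt_succ_of_lt hj)
    have hQnn' := fun j hj => hQnn j (Nat.lt_succ_of_lt hj)
    have hPnn' := fun j hj => hPnn j (Nat.lt_succ_of_lt hj)
    have hQabs' := fun j hj => hQabs j (Nat.lt_succ_of_lt hj)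
    have hle' := fun j hj => hle j (Nat.lt_succ_of_lt hj)
    have ihn := ih hπ' hQnn' hPnn' hQabs' hle'
    have hvQ := visit_nonneg (Sum.inl s₁) π Q n hπ' hQnn'
    have hvP := visit_nonneg (Sum.inl s₁) π P n hπ' hPnn'
    rw [visit, visit]
    simp only [Fintype.sum_sum_type]
    have hQzero : ∀ u : Unit, ∑ a : A,
        visit (Sum.inl s₁) π Q n (Sum.inr u) * π n (Sum.inr u) a *
          Q n (Sum.inr u) a (Sum.inl s) = 0 := by
      intro u
      refine Finset.sum_eq_zero fun a _ => ?_
      rw [show Sum.inr u = (Sum.inr () : S ⊕ Unit) from rfl,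
        hQabs n n.lt_succ_self a s, mul_zero]
    rw [Finset.sum_congr rfl (fun u _ => hQzero u), Finset.sum_const_zero, add_zero]
    have key : ∑ s' : S, ∑ a : A,
        visit (Sum.inl s₁) π Q n (Sum.inl s') * π n (Sum.inl s') a *
          Q n (Sum.inl s') a (Sum.inl s) ≤
        c ^ (n + 1) * ∑ s' : S, ∑ a : A,
          visit (Sum.inl s₁) π P n (Sum.inl s') * π n (Sum.inl s') a *
            P n (Sum.inl s') a (Sum.inl s) := by
      rw [Finset.mul_sum]
      refine Finset.sum_le_sum fun s' _ => ?_
      rw [Finset.mul_sum]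
      refine Finset.sum_le_sum fun a _ => ?_
      have h1 : visit (Sum.inl s₁) π Q n (Sum.inl s') * π n (Sum.inl s') a ≤
          (c ^ n * visit (Sum.inl s₁) π P n (Sum.inl s')) * π n (Sum.inl s') a :=
        mul_le_mul_of_nonneg_right (ihn s') (hπ n n.lt_succ_self _ a)
      have h2 := mul_le_mul h1 (hle n n.lt_succ_self s' a s)
        (hQnn n n.lt_succ_self _ a _)
        (mul_nonneg (mul_nonneg (pow_nonneg hc n) (hvP _)) (hπ n n.lt_succ_self _ a))
      calc visit (Sum.inl s₁) π Q n (Sum.inl s') * π n (Sum.inl s') a *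
            Q n (Sum.inl s') a (Sum.inl s) ≤ _ := h2
        _ = c ^ (n + 1) * (visit (Sum.inl s₁) π P n (Sum.inl s') *
            π n (Sum.inl s') a * P n (Sum.inl s') a (Sum.inl s)) := by ring
    refine key.trans ?_
    rw [mul_add]
    have : 0 ≤ c ^ (n + 1) * ∑ u : Unit, ∑ a : A,
        visit (Sum.inl s₁) π P n (Sum.inr u) * π n (Sum.inr u) a *
          P n (Sum.inr u) a (Sum.inl s) := by
      refine mul_nonneg (pow_nonneg hc _) ?_
      refine Finset.sum_nonneg fun u _ => Finset.sum_nonneg fun a _ => ?_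
      exact mul_nonneg (mul_nonneg (hvP _) (hπ n n.lt_succ_self _ a))
        (hPnn n n.lt_succ_self _ a _)
    linarith

lemma one_add_inv_pow_le_three (k : ℕ) (hk : 1 ≤ k) (h : ℕ) (hh : h ≤ k) :
    ((1 : ℝ) + 1 / k) ^ h ≤ 3 := by
  have hk0 : (0:ℝ) < k := by exact_mod_cast hk
  have h1 : (1 : ℝ) + 1 / k ≤ Real.exp (1 / k) := by
    have := Real.add_one_le_exp (1 / (k:ℝ)); linarith
  have h2 : ((1 : ℝ) + 1 / k) ^ h ≤ Real.exp (1 / k) ^ h := by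
    apply pow_le_pow_left₀ (by positivity) h1
  refine h2.trans ?_
  rw [← Real.exp_nat_mul]
  have h3 : (h : ℝ) * (1 / k) ≤ 1 := by
    rw [mul_one_div, div_le_one hk0]; exact_mod_cast hh
  calc Real.exp ((h:ℝ) * (1/k)) ≤ Real.exp 1 := Real.exp_le_exp.mpr h3
    _ ≤ 3 := by linarith [Real.exp_one_lt_d9.le]
/-- if `P^{int}` is `(1/H)`-multiplicatively accurate to `P̃`
(absorbing kernels on `S ⊕ {s†}`), `φ` is a nonempty finite set of policies,
`π_{h,s,a} = sel h s a ∈ φ` maximizes the visitation probability of `(h,s,a)`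
under `P^{int}` over `φ`, and `μ_h(s,a)` is the visitation probability of
`(h,s,a)` under `P̃` and the uniform mixture of the `H·|S|·|A|` policies
`sel h' s' a'`, then `V^π(1_{h,s,a},P̃) ≤ 12·H·|S|·|A|·μ_h(s,a)` for every
`π ∈ φ`. -/
theorem stmt_19 {S A : Type*} [Fintype S] [Fintype A] [DecidableEq S]
    [Nonempty S] [Nonempty A]
    (H : ℕ) (hH : 2 ≤ H) (s₁ : S)
    (Pint Ptil : ℕ → S ⊕ Unit → A → S ⊕ Unit → ℝ)
    (hPintnn : ∀ h < H, ∀ x a x', 0 ≤ Pint h x a x')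
    (hPintsum : ∀ h < H, ∀ x a, ∑ x', Pint h x a x' = 1)
    (hPtilnn : ∀ h < H, ∀ x a x', 0 ≤ Ptil h x a x')
    (hPtilsum : ∀ h < H, ∀ x a, ∑ x', Ptil h x a x' = 1)
    (hPintabs : ∀ h < H, ∀ a, Pint h (Sum.inr ()) a (Sum.inr ()) = 1)
    (hPtilabs : ∀ h < H, ∀ a, Ptil h (Sum.inr ()) a (Sum.inr ()) = 1)
    (hacc : ∀ h < H, ∀ (s : S) (a : A) (s' : S),
      (1 - 1/(H : ℝ)) * Pint h (Sum.inl s) a (Sum.inl s') ≤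
          Ptil h (Sum.inl s) a (Sum.inl s') ∧
        Ptil h (Sum.inl s) a (Sum.inl s') ≤
          (1 + 1/(H : ℝ)) * Pint h (Sum.inl s) a (Sum.inl s'))
    (φ : Finset (ℕ → S ⊕ Unit → A → ℝ)) (hφ : φ.Nonempty)
    (hpol : ∀ π ∈ φ, (∀ h < H, ∀ x a, 0 ≤ π h x a) ∧
      (∀ h < H, ∀ x, ∑ a, π h x a = 1))
    (sel : ℕ → S → A → (ℕ → S ⊕ Unit → A → ℝ))
    (hselmem : ∀ h < H, ∀ (s : S) (a : A), sel h s a ∈ φ)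
    (hselmax : ∀ h < H, ∀ (s : S) (a : A), ∀ π ∈ φ,
      visit (Sum.inl s₁) π Pint h (Sum.inl s) * π h (Sum.inl s) a ≤
        visit (Sum.inl s₁) (sel h s a) Pint h (Sum.inl s) *
          (sel h s a) h (Sum.inl s) a)
    (μ : ℕ → S → A → ℝ)
    (hμ : ∀ (h : ℕ) (s : S) (a : A), μ h s a =
      (1 / ((H : ℝ) * Fintype.card S * Fintype.card A)) *
        ∑ h' ∈ Finset.range H, ∑ s' : S, ∑ a' : A,
          visit (Sum.inl s₁) (sel h' s' a') Ptil h (Sum.inl s) *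
            (sel h' s' a') h (Sum.inl s) a)
    (h : ℕ) (hh : h < H) (s : S) (a : A)
    (π : ℕ → S ⊕ Unit → A → ℝ) (hπ : π ∈ φ) :
    visit (Sum.inl s₁) π Ptil h (Sum.inl s) * π h (Sum.inl s) a ≤
      12 * (H : ℝ) * Fintype.card S * Fintype.card A * μ h s a := by

  have hH0 : (0:ℝ) < H := by
    have : 0 < H := lt_of_lt_of_le two_pos hH
    exact_mod_cast this
  have hS0 : (0:ℝ) < Fintype.card S := by exact_mod_cast Fintype.card_pos
  have hA0 : (0:ℝ) < Fintype.card A := by exact_mod_cast Fintype.card_pos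
  -- absorbing rows go nowhere in S
  have habs0 : ∀ (P : ℕ → S ⊕ Unit → A → S ⊕ Unit → ℝ),
      (∀ j < H, ∀ x a x', 0 ≤ P j x a x') →
      (∀ j < H, ∀ x a, ∑ x', P j x a x' = 1) →
      (∀ j < H, ∀ a, P j (Sum.inr ()) a (Sum.inr ()) = 1) →
      ∀ j < H, ∀ (a : A) (s' : S), P j (Sum.inr ()) a (Sum.inl s') = 0 := by
    intro P hnn hsum habs j hj a s'
    have h1 := hsum j hj (Sum.inr ()) a
    rw [Fintype.sum_sum_type] at h1
    have h2 : ∑ u : Unit, P j (Sum.inr ()) a (Sum.inr u) = 1 := by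
      simpa using habs j hj a
    have h3 : ∑ s'' : S, P j (Sum.inr ()) a (Sum.inl s'') = 0 := by linarith
    exact (Finset.sum_eq_zero_iff_of_nonneg
      (fun s'' _ => hnn j hj _ a _)).mp h3 s' (Finset.mem_univ s')
  have hPtil0 := habs0 Ptil hPtilnn hPtilsum hPtilabs
  have hPint0 := habs0 Pint hPintnn hPintsum hPintabs
  have hπnn := (hpol π hπ).1
  have hselin := hselmem h hh s a
  have hselnn := (hpol (sel h s a) hselin).1
  -- the two multiplicative constants
  have hHinv : 1/(H:ℝ) ≤ 1/2 := by
    apply div_le_div_of_nonneg_left one_pos.le two_pos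
    exact_mod_cast hH
  have hc1 : (0:ℝ) ≤ 1 + 1/(H:ℝ) := by positivity
  have hden : (0:ℝ) < 1 - 1/(H:ℝ) := by linarith
  have hc2 : (0:ℝ) ≤ (1 - 1/(H:ℝ))⁻¹ := by positivity
  -- step 1: visit under Ptil vs Pint for π
  have step1 := visit_le s₁ π Ptil Pint (1 + 1/(H:ℝ)) hc1 h
    (fun j hj => hπnn j (hj.trans hh))
    (fun j hj => hPtilnn j (hj.trans hh))
    (fun j hj => hPintnn j (hj.trans hh))
    (fun j hj => hPtil0 j (hj.trans hh))
    (fun j hj s' a' s'' => (hacc j (hj.trans hh) s' a' s'').2) s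
  -- step 3: visit under Pint vs Ptil for sel h s a
  have step3 := visit_le s₁ (sel h s a) Pint Ptil ((1 - 1/(H:ℝ))⁻¹) hc2 h
    (fun j hj => hselnn j (hj.trans hh))
    (fun j hj => hPintnn j (hj.trans hh))
    (fun j hj => hPtilnn j (hj.trans hh))
    (fun j hj => hPint0 j (hj.trans hh))
    (fun j hj s' a' s'' => by
      have h0 := (hacc j (hj.trans hh) s' a' s'').1
      rw [inv_mul_eq_div, le_div_iff₀ hden]
      linarith) s
  -- exponent bounds
  have hb1 : ((1:ℝ) + 1/(H:ℝ)) ^ h ≤ 3 :=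
    one_add_inv_pow_le_three H (le_trans one_le_two hH) h hh.le
  have hb2 : ((1 - 1/(H:ℝ))⁻¹) ^ h ≤ 3 := by
    have hk : 1 ≤ H - 1 := by omega
    have hcast : ((H - 1 : ℕ) : ℝ) = (H:ℝ) - 1 := by
      have : 1 ≤ H := le_trans one_le_two hH
      push_cast [Nat.cast_sub this]; ring
    have heq : (1 - 1/(H:ℝ))⁻¹ = 1 + 1/((H - 1 : ℕ) : ℝ) := by
      rw [hcast]
      have hne : (H:ℝ) - 1 ≠ 0 := by
        have : (2:ℝ) ≤ H := by exact_mod_cast hH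
        intro hcon; rw [sub_eq_zero] at hcon; linarith
      field_simp
      ring
    rw [heq]
    exact one_add_inv_pow_le_three (H - 1) hk h (by omega)
  -- nonnegativity of visits
  have hvselP : 0 ≤ visit (Sum.inl s₁) (sel h s a) Ptil h (Sum.inl s) :=
    visit_nonneg _ _ _ h (fun j hj => hselnn j (hj.trans hh))
      (fun j hj => hPtilnn j (hj.trans hh)) _
  have hvπP : 0 ≤ visit (Sum.inl s₁) π Pint h (Sum.inl s) :=
    visit_nonneg _ _ _ h (fun j hj => hπnn j (hj.trans hh))
      (fun j hj => hPintnn j (hj.trans hh)) _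
  set Vπ := visit (Sum.inl s₁) π Ptil h (Sum.inl s) * π h (Sum.inl s) a with hVπ
  set Vsel := visit (Sum.inl s₁) (sel h s a) Ptil h (Sum.inl s) *
    (sel h s a) h (Sum.inl s) a with hVsel
  have hselann : 0 ≤ (sel h s a) h (Sum.inl s) a := hselnn h hh _ a
  have hπann : 0 ≤ π h (Sum.inl s) a := hπnn h hh _ a
  have hVselnn : 0 ≤ Vsel := mul_nonneg hvselP hselann
  -- chain: Vπ ≤ 9 * Vsel
  have chain : Vπ ≤ 9 * Vsel := by
    have e1 : Vπ ≤ ((1 + 1/(H:ℝ)) ^ h) *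
        (visit (Sum.inl s₁) π Pint h (Sum.inl s) * π h (Sum.inl s) a) := by
      rw [hVπ, ← mul_assoc]
      exact mul_le_mul_of_nonneg_right step1 hπann
    have e2 : visit (Sum.inl s₁) π Pint h (Sum.inl s) * π h (Sum.inl s) a ≤
        visit (Sum.inl s₁) (sel h s a) Pint h (Sum.inl s) *
          (sel h s a) h (Sum.inl s) a := hselmax h hh s a π hπ
    have e3 : visit (Sum.inl s₁) (sel h s a) Pint h (Sum.inl s) *
          (sel h s a) h (Sum.inl s) a ≤ (((1 - 1/(H:ℝ))⁻¹) ^ h) * Vsel := by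
      rw [hVsel, ← mul_assoc]
      exact mul_le_mul_of_nonneg_right step3 hselann
    have hp1 : (0:ℝ) ≤ (1 + 1/(H:ℝ)) ^ h := pow_nonneg hc1 h
    have hp2 : (0:ℝ) ≤ ((1 - 1/(H:ℝ))⁻¹) ^ h := pow_nonneg hc2 h
    calc Vπ ≤ ((1 + 1/(H:ℝ)) ^ h) *
        (visit (Sum.inl s₁) π Pint h (Sum.inl s) * π h (Sum.inl s) a) := e1
      _ ≤ ((1 + 1/(H:ℝ)) ^ h) * ((((1 - 1/(H:ℝ))⁻¹) ^ h) * Vsel) :=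
        mul_le_mul_of_nonneg_left (e2.trans e3) hp1
      _ ≤ 3 * (3 * Vsel) := by
        have h1 : (((1 - 1/(H:ℝ))⁻¹) ^ h) * Vsel ≤ 3 * Vsel :=
          mul_le_mul_of_nonneg_right hb2 hVselnn
        have h2 : 0 ≤ (((1 - 1/(H:ℝ))⁻¹) ^ h) * Vsel := mul_nonneg hp2 hVselnn
        nlinarith
      _ = 9 * Vsel := by ring
  -- Vsel ≤ the mixture sum
  set T := ∑ h' ∈ Finset.range H, ∑ s' : S, ∑ a' : A,
      visit (Sum.inl s₁) (sel h' s' a') Ptil h (Sum.inl s) *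
        (sel h' s' a') h (Sum.inl s) a with hT
  have fnn : ∀ h' ∈ Finset.range H, ∀ (s' : S) (a' : A),
      0 ≤ visit (Sum.inl s₁) (sel h' s' a') Ptil h (Sum.inl s) *
        (sel h' s' a') h (Sum.inl s) a := by
    intro h' hh' s' a'
    have hmem := hselmem h' (Finset.mem_range.mp hh') s' a'
    have hnn := (hpol _ hmem).1
    exact mul_nonneg (visit_nonneg _ _ _ h (fun j hj => hnn j (hj.trans hh))
      (fun j hj => hPtilnn j (hj.trans hh)) _) (hnn h hh _ a)
  have hVT : Vsel ≤ T := by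
    rw [hT]
    have s1 : Vsel ≤ ∑ a' : A,
        visit (Sum.inl s₁) (sel h s a') Ptil h (Sum.inl s) *
          (sel h s a') h (Sum.inl s) a :=
      Finset.single_le_sum (fun a' _ => fnn h (Finset.mem_range.mpr hh) s a')
        (Finset.mem_univ a)
    have s2 : (∑ a' : A,
        visit (Sum.inl s₁) (sel h s a') Ptil h (Sum.inl s) *
          (sel h s a') h (Sum.inl s) a) ≤ ∑ s' : S, ∑ a' : A,
        visit (Sum.inl s₁) (sel h s' a') Ptil h (Sum.inl s) *
          (sel h s' a') h (Sum.inl s) a :=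
      Finset.single_le_sum (fun s' _ => Finset.sum_nonneg fun a' _ =>
        fnn h (Finset.mem_range.mpr hh) s' a') (Finset.mem_univ s)
    have s3 : (∑ s' : S, ∑ a' : A,
        visit (Sum.inl s₁) (sel h s' a') Ptil h (Sum.inl s) *
          (sel h s' a') h (Sum.inl s) a) ≤ T := by
      rw [hT]
      exact Finset.single_le_sum (fun h' hh' => Finset.sum_nonneg fun s' _ =>
        Finset.sum_nonneg fun a' _ => fnn h' hh' s' a')
        (Finset.mem_range.mpr hh)
    exact (s1.trans s2).trans (s3.trans_eq hT.symm) |>.trans_eq hT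
  rw [hμ]
  have hne : (H:ℝ) * Fintype.card S * Fintype.card A ≠ 0 := by positivity
  have heq : 12 * (H:ℝ) * Fintype.card S * Fintype.card A *
      ((1 / ((H:ℝ) * Fintype.card S * Fintype.card A)) * T) = 12 * T := by
    field_simp
  rw [← hT, heq]
  linarith
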